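/- Let A ∈ ℝ^{m×np} have column blocks A = [A₁,…,A_p], A_j ∈ ℝ^{m×n}, let s_* = 1/(max_i inf_{P_i} max_j ‖δ_{ij} I_n − P_iᵀ A_j‖₂), and fix s with 1 < s < s_*. Define g_s(η) = max_i inf_{P_i ∈ ℝ^{m×n}} ( sη · max_j ‖δ_{ij} I_n − P_iᵀ A_j‖₂ + ‖P_i‖₂ ). If η^* is the unique positive fixed point of g_s, then η^* ≥ 1/ω₂(A,s). Similarly, with Q = A^T A and h_s(η) = max_i inf_{P_i ∈ ℝ^{np×n}} ( sη · max_j ‖δ_{ij} I_n − P_iᵀ Q_j‖₂ + Σ_{l=1}^p ‖P_i^l‖₂ ) (P_i^l the n×n row blocks of P_i), the unique positive fixed point η^* of h_s satisfies η^* ≥ 1/ω_{b∞}(A^T A, s). -/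

import Mathlib

/-!
Let `z ≠ 0` satisfy `‖z‖_{b1} ≤ s ‖z‖_{b∞}` and let `i` be a block with `‖z_i‖₂ = ‖z‖_{b∞}`.
With `B = A` (resp. `B = AᵀA`), every `P` gives `z_i = Σ_j (δ_{ij} Iₙ - Pᵀ B_j) z_j + Pᵀ B z`, hence
`‖z‖_{b∞} ≤ s D(P) ‖z‖_{b∞} + C(P) V`, where `D(P) = max_j ‖δ_{ij} Iₙ - Pᵀ B_j‖₂` and
`C(P) = ‖P‖₂`, `V = ‖Az‖₂` (resp. `C(P) = Σ_l ‖P^l‖₂`, `V = ‖AᵀAz‖_{b∞}`).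
At a fixed point `η`, the infimum of `s η D(P) + C(P)` is at most `η`, so multiplying by `η`
gives `C(P) (‖z‖_{b∞} - η V) ≤ (s η D(P) + C(P) - η) ‖z‖_{b∞}`. Along a minimising sequence
`C(P)` stays bounded below because `1 - C(P) M_i ≤ D(P)` for a constant `M_i` (the `j = i`
term of `D`) and `s > 1`, which forces
`‖z‖_{b∞} ≤ η V`, i.e. `1/η` is below every ratio defining `ω`.
-/

open MeasureTheory ProbabilityTheory Finset Matrix

/-- Euclidean norm of a finitely-indexed real vector. -/
noncomputable def vnorm {ι : Type*} [Fintype ι] (v : ι → ℝ) : ℝ :=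
  Real.sqrt (∑ i, (v i) ^ 2)

/-- Euclidean norm of the `i`-th block of `x ∈ ℝ^{np}` (blocks indexed by `Fin p`). -/
noncomputable def bnorm {n p : ℕ} (x : Fin p × Fin n → ℝ) (i : Fin p) : ℝ :=
  vnorm (fun j => x (i, j))

/-- Block-ℓ1 norm: `‖x‖_{b1} = ∑ i, ‖x_i‖₂`. -/
noncomputable def bl1 {n p : ℕ} (x : Fin p × Fin n → ℝ) : ℝ :=
  ∑ i, bnorm x i

/-- Block-ℓ∞ norm: `‖x‖_{b∞} = max_i ‖x_i‖₂`. -/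
noncomputable def blinf {n p : ℕ} (x : Fin p × Fin n → ℝ) : ℝ :=
  ⨆ i, bnorm x i

open scoped Classical in
/-- Block support: indices of nonzero blocks. -/
noncomputable def bsupp {n p : ℕ} (x : Fin p × Fin n → ℝ) : Finset (Fin p) :=
  Finset.univ.filter (fun i => ∃ j, x (i, j) ≠ 0)

/-- `ω₂(A,s) = inf { ‖Az‖₂ / ‖z‖_{b∞} : z ≠ 0, ‖z‖_{b1} ≤ s ‖z‖_{b∞} }`. -/
noncomputable def omega2 {m n p : ℕ} (A : Matrix (Fin m) (Fin p × Fin n) ℝ) (s : ℝ) : ℝ :=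
  sInf {r | ∃ z : Fin p × Fin n → ℝ, z ≠ 0 ∧ bl1 z ≤ s * blinf z ∧
    r = vnorm (A.mulVec z) / blinf z}

/-- `ω_{b∞}(AᵀA,s) = inf { ‖AᵀAz‖_{b∞} / ‖z‖_{b∞} : z ≠ 0, ‖z‖_{b1} ≤ s ‖z‖_{b∞} }`. -/
noncomputable def omegaBInf {m n p : ℕ} (A : Matrix (Fin m) (Fin p × Fin n) ℝ) (s : ℝ) : ℝ :=
  sInf {r | ∃ z : Fin p × Fin n → ℝ, z ≠ 0 ∧ bl1 z ≤ s * blinf z ∧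
    r = blinf ((Aᵀ * A).mulVec z) / blinf z}

/-- Block ℓ1-constrained minimal singular value
`ρ_s(A) = inf { ‖Az‖₂ / ‖z‖₂ : z ≠ 0, ‖z‖_{b1}² ≤ s ‖z‖₂² }`. -/
noncomputable def rhoCMSV {m n p : ℕ} (A : Matrix (Fin m) (Fin p × Fin n) ℝ) (s : ℝ) : ℝ :=
  sInf {r | ∃ z : Fin p × Fin n → ℝ, z ≠ 0 ∧ (bl1 z) ^ 2 ≤ s * (vnorm z) ^ 2 ∧
    r = vnorm (A.mulVec z) / vnorm z}

/-- Spectral norm (largest singular value) of a real matrix, as the ℓ2→ℓ2 operator norm. -/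
noncomputable def specNorm {ι κ : Type*} [Fintype ι] [Fintype κ] (M : Matrix ι κ ℝ) : ℝ :=
  sSup {r | ∃ v : κ → ℝ, vnorm v ≤ 1 ∧ r = vnorm (M.mulVec v)}

/-- The `j`-th column block (of `n` columns) of a matrix with `np` columns. -/
def colBlock {ι : Type*} {n p : ℕ} (Q : Matrix ι (Fin p × Fin n) ℝ) (j : Fin p) :
    Matrix ι (Fin n) ℝ := Matrix.of fun r c => Q r (j, c)

/-- The `l`-th row block (of `n` rows) of a matrix with `np` rows. -/
def rowBlock {κ : Type*} {n p : ℕ} (P : Matrix (Fin p × Fin n) κ ℝ) (l : Fin p) :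
    Matrix (Fin n) κ ℝ := Matrix.of fun r c => P (l, r) c

/-- `δ_{ij} Iₙ`. -/
def deltaId (n : ℕ) {p : ℕ} (i j : Fin p) : Matrix (Fin n) (Fin n) ℝ :=
  if i = j then 1 else 0

/-- Orlicz ψ₂ norm of a scalar random variable. -/
noncomputable def psi2 {Ω : Type*} [MeasurableSpace Ω] (μ : Measure Ω) (Y : Ω → ℝ) : ℝ :=
  sInf {t | 0 < t ∧ ∫ ω, Real.exp ((Y ω) ^ 2 / t ^ 2) ∂μ ≤ 2}

open scoped Matrix.Norms.L2Operator

section Norms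

variable {ι κ : Type*} [Fintype ι] [Fintype κ]

lemma vnorm_eq_norm_toLp (v : ι → ℝ) : vnorm v = ‖WithLp.toLp 2 v‖ := by
  simp [vnorm, EuclideanSpace.norm_eq]

lemma vnorm_add_le (u v : ι → ℝ) : vnorm (u + v) ≤ vnorm u + vnorm v := by
  simpa only [vnorm_eq_norm_toLp, WithLp.toLp_add] using norm_add_le _ _

lemma vnorm_sum_le {α : Type*} (s : Finset α) (v : α → ι → ℝ) :
    vnorm (∑ l ∈ s, v l) ≤ ∑ l ∈ s, vnorm (v l) := by
  simpa only [vnorm_eq_norm_toLp, WithLp.toLp_sum] using norm_sum_le s fun l => WithLp.toLp 2 (v l)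

lemma specNorm_eq_l2_opNorm [DecidableEq κ] (M : Matrix ι κ ℝ) : specNorm M = ‖M‖ := by
  rw [Matrix.l2_opNorm_def, ← ContinuousLinearMap.sSup_unitClosedBall_eq_norm, specNorm]
  congr 1
  ext r
  simp only [Set.mem_image, Metric.mem_closedBall, dist_zero_right, vnorm_eq_norm_toLp]
  constructor
  · rintro ⟨v, hv, rfl⟩
    exact ⟨WithLp.toLp 2 v, hv, rfl⟩
  · rintro ⟨x, hx, rfl⟩
    exact ⟨x.ofLp, hx, rfl⟩

lemma specNorm_nonneg [DecidableEq κ] (M : Matrix ι κ ℝ) : 0 ≤ specNorm M :=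
  specNorm_eq_l2_opNorm M ▸ norm_nonneg M

lemma vnorm_mulVec_le [DecidableEq κ] (M : Matrix ι κ ℝ) (v : κ → ℝ) :
    vnorm (M *ᵥ v) ≤ specNorm M * vnorm v := by
  simpa [vnorm_eq_norm_toLp, specNorm_eq_l2_opNorm] using M.l2_opNorm_mulVec (WithLp.toLp 2 v)

lemma specNorm_transpose [DecidableEq ι] [DecidableEq κ] (M : Matrix ι κ ℝ) :
    specNorm Mᵀ = specNorm M := by
  rw [specNorm_eq_l2_opNorm, specNorm_eq_l2_opNorm,
    ← Matrix.conjTranspose_eq_transpose_of_trivial, Matrix.l2_opNorm_conjTranspose]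

lemma specNorm_mul_le {κ' : Type*} [Fintype κ'] [DecidableEq κ] [DecidableEq κ']
    (M : Matrix ι κ ℝ) (N : Matrix κ κ' ℝ) : specNorm (M * N) ≤ specNorm M * specNorm N := by
  simpa only [specNorm_eq_l2_opNorm] using Matrix.l2_opNorm_mul M N

lemma vnorm_transpose_mulVec_le [DecidableEq ι] [DecidableEq κ] (M : Matrix ι κ ℝ) (v : ι → ℝ) :
    vnorm (Mᵀ *ᵥ v) ≤ specNorm M * vnorm v :=
  specNorm_transpose M ▸ vnorm_mulVec_le Mᵀ v

lemma specNorm_transpose_mul_le {κ' : Type*} [Fintype κ'] [DecidableEq ι] [DecidableEq κ]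
    [DecidableEq κ'] (M : Matrix ι κ ℝ) (N : Matrix ι κ' ℝ) :
    specNorm (Mᵀ * N) ≤ specNorm M * specNorm N :=
  specNorm_transpose M ▸ specNorm_mul_le Mᵀ N

lemma specNorm_sum_le {α : Type*} [DecidableEq κ] (s : Finset α) (M : α → Matrix ι κ ℝ) :
    specNorm (∑ l ∈ s, M l) ≤ ∑ l ∈ s, specNorm (M l) := by
  simpa only [specNorm_eq_l2_opNorm] using norm_sum_le s M

lemma one_sub_specNorm_le [DecidableEq ι] [Nonempty ι] (M : Matrix ι ι ℝ) :
    1 - specNorm M ≤ specNorm (1 - M) := by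
  simp only [specNorm_eq_l2_opNorm]
  have h := norm_sub_norm_le (1 : Matrix ι ι ℝ) M
  rw [CStarRing.norm_one] at h
  linarith

end Norms

section Blocks

variable {n p : ℕ} {ι : Type*}

lemma bnorm_nonneg (x : Fin p × Fin n → ℝ) (i : Fin p) : 0 ≤ bnorm x i :=
  Real.sqrt_nonneg _

lemma bnorm_le_blinf (x : Fin p × Fin n → ℝ) (i : Fin p) : bnorm x i ≤ blinf x :=
  le_ciSup (Set.finite_range _).bddAbove i

lemma blinf_pos {x : Fin p × Fin n → ℝ} (hx : x ≠ 0) : 0 < blinf x := by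
  obtain ⟨⟨i, c⟩, hic⟩ := Function.ne_iff.mp hx
  refine (Real.sqrt_pos.mpr ?_).trans_le (bnorm_le_blinf x i)
  exact (sq_pos_of_ne_zero hic).trans_le
    (Finset.single_le_sum (fun j _ => sq_nonneg (x (i, j))) (Finset.mem_univ c))

lemma mulVec_eq_sum_colBlock (B : Matrix ι (Fin p × Fin n) ℝ) (z : Fin p × Fin n → ℝ) :
    B *ᵥ z = ∑ j, colBlock B j *ᵥ Function.curry z j := by
  ext r
  simp [Matrix.mulVec, dotProduct, colBlock, Fintype.sum_prod_type]

lemma sum_deltaId_mulVec (z : Fin p × Fin n → ℝ) (i : Fin p) :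
    ∑ j, deltaId n i j *ᵥ Function.curry z j = Function.curry z i := by
  rw [Finset.sum_eq_single i (fun j _ hj => by simp [deltaId, hj.symm]) (by simp)]
  simp [deltaId]

lemma transpose_mulVec_eq_sum_rowBlock (P : Matrix (Fin p × Fin n) ι ℝ)
    (w : Fin p × Fin n → ℝ) : Pᵀ *ᵥ w = ∑ l, (rowBlock P l)ᵀ *ᵥ Function.curry w l := by
  ext c
  simp [Matrix.mulVec, dotProduct, rowBlock, Fintype.sum_prod_type]

lemma transpose_mul_eq_sum_rowBlock {κ : Type*} (P : Matrix (Fin p × Fin n) ι ℝ)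
    (N : Matrix (Fin p × Fin n) κ ℝ) : Pᵀ * N = ∑ l, (rowBlock P l)ᵀ * rowBlock N l := by
  ext r c
  simp [Matrix.mul_apply, Matrix.sum_apply, rowBlock, Fintype.sum_prod_type]

variable [Fintype ι]

lemma vnorm_transpose_mulVec_le_sum_rowBlock [DecidableEq ι] (P : Matrix (Fin p × Fin n) ι ℝ)
    (w : Fin p × Fin n → ℝ) : vnorm (Pᵀ *ᵥ w) ≤ (∑ l, specNorm (rowBlock P l)) * blinf w := by
  rw [transpose_mulVec_eq_sum_rowBlock, Finset.sum_mul]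
  refine (vnorm_sum_le _ _).trans (Finset.sum_le_sum fun l _ => ?_)
  calc vnorm ((rowBlock P l)ᵀ *ᵥ Function.curry w l)
      ≤ specNorm (rowBlock P l) * bnorm w l :=
        vnorm_transpose_mulVec_le (rowBlock P l) (Function.curry w l)
    _ ≤ specNorm (rowBlock P l) * blinf w :=
        mul_le_mul_of_nonneg_left (bnorm_le_blinf w l) (specNorm_nonneg _)

lemma specNorm_transpose_mul_le_sum_rowBlock [DecidableEq ι] {κ : Type*} [Fintype κ]
    [DecidableEq κ]
    (P : Matrix (Fin p × Fin n) ι ℝ) (N : Matrix (Fin p × Fin n) κ ℝ) :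
    specNorm (Pᵀ * N) ≤ (∑ l, specNorm (rowBlock P l)) * ⨆ l, specNorm (rowBlock N l) := by
  rw [transpose_mul_eq_sum_rowBlock, Finset.sum_mul]
  refine (specNorm_sum_le _ _).trans (Finset.sum_le_sum fun l _ => ?_)
  calc specNorm ((rowBlock P l)ᵀ * rowBlock N l)
      ≤ specNorm (rowBlock P l) * specNorm (rowBlock N l) :=
        specNorm_transpose_mul_le (rowBlock P l) (rowBlock N l)
    _ ≤ specNorm (rowBlock P l) * ⨆ l, specNorm (rowBlock N l) :=
        mul_le_mul_of_nonneg_left (le_ciSup (f := fun l => specNorm (rowBlock N l))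
          (Set.finite_range _).bddAbove l) (specNorm_nonneg _)

noncomputable def blockResidual (B : Matrix ι (Fin p × Fin n) ℝ) (P : Matrix ι (Fin n) ℝ)
    (i : Fin p) : ℝ :=
  ⨆ j, specNorm (deltaId n i j - Pᵀ * colBlock B j)

lemma specNorm_le_blockResidual (B : Matrix ι (Fin p × Fin n) ℝ) (P : Matrix ι (Fin n) ℝ)
    (i j : Fin p) : specNorm (deltaId n i j - Pᵀ * colBlock B j) ≤ blockResidual B P i :=
  le_ciSup (f := fun j => specNorm (deltaId n i j - Pᵀ * colBlock B j))
    (Set.finite_range _).bddAbove j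

lemma one_sub_specNorm_le_blockResidual [NeZero n] (B : Matrix ι (Fin p × Fin n) ℝ)
    (P : Matrix ι (Fin n) ℝ) (i : Fin p) :
    1 - specNorm (Pᵀ * colBlock B i) ≤ blockResidual B P i := by
  have h := specNorm_le_blockResidual B P i i
  rw [deltaId, if_pos rfl] at h
  exact (one_sub_specNorm_le _).trans h

lemma curry_eq_sum_mulVec_add (B : Matrix ι (Fin p × Fin n) ℝ) (P : Matrix ι (Fin n) ℝ)
    (z : Fin p × Fin n → ℝ) (i : Fin p) :
    Function.curry z i =
      ∑ j, (deltaId n i j - Pᵀ * colBlock B j) *ᵥ Function.curry z j + Pᵀ *ᵥ (B *ᵥ z) := by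
  simp only [Matrix.sub_mulVec, Finset.sum_sub_distrib, sum_deltaId_mulVec,
    mulVec_eq_sum_colBlock B z, Matrix.mulVec_sum, Matrix.mulVec_mulVec, sub_add_cancel]

lemma bnorm_le_blockResidual_mul_bl1_add (B : Matrix ι (Fin p × Fin n) ℝ)
    (P : Matrix ι (Fin n) ℝ) (z : Fin p × Fin n → ℝ) (i : Fin p) :
    bnorm z i ≤ blockResidual B P i * bl1 z + vnorm (Pᵀ *ᵥ (B *ᵥ z)) := by
  calc bnorm z i
      = vnorm (∑ j, (deltaId n i j - Pᵀ * colBlock B j) *ᵥ Function.curry z j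
          + Pᵀ *ᵥ (B *ᵥ z)) := congrArg vnorm (curry_eq_sum_mulVec_add B P z i)
    _ ≤ ∑ j, vnorm ((deltaId n i j - Pᵀ * colBlock B j) *ᵥ Function.curry z j)
          + vnorm (Pᵀ *ᵥ (B *ᵥ z)) :=
        (vnorm_add_le _ _).trans (add_le_add_left (vnorm_sum_le _ _) _)
    _ ≤ ∑ j, blockResidual B P i * bnorm z j + vnorm (Pᵀ *ᵥ (B *ᵥ z)) := by
        gcongr with j
        exact (vnorm_mulVec_le _ _).trans (mul_le_mul_of_nonneg_right
          (specNorm_le_blockResidual B P i j) (bnorm_nonneg z j))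
    _ = blockResidual B P i * bl1 z + vnorm (Pᵀ *ᵥ (B *ᵥ z)) := by rw [bl1, Finset.mul_sum]

end Blocks

lemma le_mul_of_sInf_le {X : Type*} [Nonempty X] (D C : X → ℝ) {s η b V M : ℝ} (hs : 1 < s)
    (hη : 0 < η) (hb : 0 ≤ b) (hM : 0 ≤ M) (hC : ∀ x, 0 ≤ C x)
    (hCD : ∀ x, 1 - C x * M ≤ D x) (hbD : ∀ x, b ≤ s * D x * b + C x * V)
    (hinf : sInf {r | ∃ x, r = s * η * D x + C x} ≤ η) : b ≤ η * V := by
  by_contra! hlt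
  set u := b - η * V
  have hu : 0 < u := by linarith
  have hden : 0 < u + s * η * M * b := by positivity
  -- a lower bound for every `s η D x + C x`, strictly above `η` because `s > 1`
  have hL : s * η * (u + η * M * b) / (u + s * η * M * b) ≤ η := by
    refine le_trans (le_csInf ?_ ?_) hinf
    · exact ⟨_, Classical.arbitrary X, rfl⟩
    rintro _ ⟨x, rfl⟩
    rw [div_le_iff₀ hden]
    have h1 : C x * u ≤ (s * η * D x + C x - η) * b := by
      nlinarith [mul_le_mul_of_nonneg_left (hbD x) hη.le]
    have h2 : s * η - (s * η * D x + C x) ≤ s * η * (C x * M) := by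
      nlinarith [mul_le_mul_of_nonneg_left (hCD x) (by positivity : 0 ≤ s * η), hC x]
    nlinarith [mul_le_mul_of_nonneg_left h1 (by positivity : 0 ≤ s * η * M),
      mul_le_mul_of_nonneg_right h2 hu.le]
  rw [div_le_iff₀ hden] at hL
  nlinarith [mul_pos hη hu]

lemma blinf_le_mul_of_sInf_le {n p : ℕ} {ι : Type*} [Fintype ι]
    (B : Matrix ι (Fin p × Fin n) ℝ) (C : Matrix ι (Fin n) ℝ → ℝ) (M : Fin p → ℝ)
    {s η V : ℝ} {z : Fin p × Fin n → ℝ} (hs : 1 < s) (hη : 0 < η) (hz : z ≠ 0)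
    (hzs : bl1 z ≤ s * blinf z) (hC : ∀ P, 0 ≤ C P) (hM : ∀ i, 0 ≤ M i)
    (hCV : ∀ P, vnorm (Pᵀ *ᵥ (B *ᵥ z)) ≤ C P * V)
    (hCM : ∀ P i, specNorm (Pᵀ * colBlock B i) ≤ C P * M i)
    (hinf : ∀ i, sInf {r | ∃ P, r = s * η * blockResidual B P i + C P} ≤ η) :
    blinf z ≤ η * V := by
  obtain ⟨⟨i₀, c₀⟩, -⟩ := Function.ne_iff.mp hz
  have : Nonempty (Fin p) := ⟨i₀⟩
  have : NeZero n := ⟨(Fin.pos c₀).ne'⟩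
  obtain ⟨i, hi⟩ := exists_eq_ciSup_of_finite (f := bnorm z)
  rw [blinf, ← hi] at hzs ⊢
  refine le_mul_of_sInf_le (fun P => blockResidual B P i) C hs hη (bnorm_nonneg z i) (hM i) hC
    (fun P => ?_) (fun P => ?_) (hinf i)
  · exact (sub_le_sub_left (hCM P i) 1).trans (one_sub_specNorm_le_blockResidual B P i)
  · have hres : 0 ≤ blockResidual B P i :=
      (specNorm_nonneg _).trans (specNorm_le_blockResidual B P i i)
    calc bnorm z i ≤ blockResidual B P i * bl1 z + vnorm (Pᵀ *ᵥ (B *ᵥ z)) :=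
          bnorm_le_blockResidual_mul_bl1_add B P z i
      _ ≤ blockResidual B P i * (s * bnorm z i) + C P * V := by gcongr; exact hCV P
      _ = s * blockResidual B P i * bnorm z i + C P * V := by ring

lemma one_div_sInf_le_of_forall_blinf_le {n p : ℕ} (F : (Fin p × Fin n → ℝ) → ℝ) {s η : ℝ}
    (hη : 0 < η) (h : ∀ z, z ≠ 0 → bl1 z ≤ s * blinf z → blinf z ≤ η * F z) :
    1 / sInf {r | ∃ z, z ≠ 0 ∧ bl1 z ≤ s * blinf z ∧ r = F z / blinf z} ≤ η := by
  rcases Set.eq_empty_or_nonempty {r | ∃ z, z ≠ 0 ∧ bl1 z ≤ s * blinf z ∧ r = F z / blinf z}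
    with hempty | hne
  · rw [hempty, Real.sInf_empty, div_zero]
    exact hη.le
  · have hlow : 1 / η ≤ sInf {r | ∃ z, z ≠ 0 ∧ bl1 z ≤ s * blinf z ∧ r = F z / blinf z} := by
      refine le_csInf hne ?_
      rintro _ ⟨z, hz, hzs, rfl⟩
      rw [div_le_div_iff₀ hη (blinf_pos hz)]
      linarith [h z hz hzs]
    rwa [one_div_le (one_div_pos.mpr hη |>.trans_le hlow) hη]

theorem stmt19_general {m n p : ℕ} (A : Matrix (Fin m) (Fin p × Fin n) ℝ) (s : ℝ)
    (g h : ℝ → ℝ)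
    (hs1 : 1 < s)
    (hg : ∀ η, g η = ⨆ i : Fin p, sInf {r | ∃ P : Matrix (Fin m) (Fin n) ℝ,
      r = s * η * (⨆ j : Fin p, specNorm (deltaId n i j - Pᵀ * colBlock A j)) + specNorm P})
    (hh : ∀ η, h η = ⨆ i : Fin p, sInf {r | ∃ P : Matrix (Fin p × Fin n) (Fin n) ℝ,
      r = s * η * (⨆ j : Fin p, specNorm (deltaId n i j - Pᵀ * colBlock (Aᵀ * A) j)) +
        ∑ l : Fin p, specNorm (rowBlock P l)}) :
    (∀ ηstar : ℝ, 0 < ηstar → g ηstar = ηstar → 1 / omega2 A s ≤ ηstar) ∧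
    (∀ ηstar : ℝ, 0 < ηstar → h ηstar = ηstar → 1 / omegaBInf A s ≤ ηstar) := by
  refine ⟨fun η hη hfix => ?_, fun η hη hfix => ?_⟩
  · refine one_div_sInf_le_of_forall_blinf_le (fun z => vnorm (A *ᵥ z)) hη fun z hz hzs => ?_
    exact blinf_le_mul_of_sInf_le A specNorm (fun i => specNorm (colBlock A i)) hs1 hη hz hzs
      specNorm_nonneg (fun i => specNorm_nonneg _) (fun P => vnorm_transpose_mulVec_le P _)
      (fun P i => specNorm_transpose_mul_le P _)
      (fun i => (le_ciSup (Set.finite_range _).bddAbove i).trans ((hg η).symm.trans hfix).le)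
  · refine one_div_sInf_le_of_forall_blinf_le (fun z => blinf ((Aᵀ * A) *ᵥ z)) hη
      fun z hz hzs => ?_
    exact blinf_le_mul_of_sInf_le (Aᵀ * A) (fun P => ∑ l, specNorm (rowBlock P l))
      (fun i => ⨆ l, specNorm (rowBlock (colBlock (Aᵀ * A) i) l)) hs1 hη hz hzs
      (fun P => Finset.sum_nonneg fun l _ => specNorm_nonneg _)
      (fun i => Real.iSup_nonneg fun l => specNorm_nonneg _)
      (fun P => vnorm_transpose_mulVec_le_sum_rowBlock P _)
      (fun P i => specNorm_transpose_mul_le_sum_rowBlock P _)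
      (fun i => (le_ciSup (Set.finite_range _).bddAbove i).trans ((hh η).symm.trans hfix).le)

/-- Theorem 4: for `1 < s < s_*`, the unique positive fixed point of
`g_s` is an upper bound on `1/ω₂(A,s)`, and the unique positive fixed point of `h_s`
(built from `Q = AᵀA`) is an upper bound on `1/ω_{b∞}(AᵀA,s)`. -/
theorem stmt19 {m n p : ℕ} (A : Matrix (Fin m) (Fin p × Fin n) ℝ) (s sstar : ℝ)
    (g h : ℝ → ℝ)
    (hsstar : sstar = 1 / (⨆ i : Fin p, sInf {r | ∃ P : Matrix (Fin m) (Fin n) ℝ,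
      r = ⨆ j : Fin p, specNorm (deltaId n i j - Pᵀ * colBlock A j)}))
    (hs1 : 1 < s) (hs2 : s < sstar)
    (hg : ∀ η, g η = ⨆ i : Fin p, sInf {r | ∃ P : Matrix (Fin m) (Fin n) ℝ,
      r = s * η * (⨆ j : Fin p, specNorm (deltaId n i j - Pᵀ * colBlock A j)) + specNorm P})
    (hh : ∀ η, h η = ⨆ i : Fin p, sInf {r | ∃ P : Matrix (Fin p × Fin n) (Fin n) ℝ,
      r = s * η * (⨆ j : Fin p, specNorm (deltaId n i j - Pᵀ * colBlock (Aᵀ * A) j)) +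
        ∑ l : Fin p, specNorm (rowBlock P l)}) :
    (∀ ηstar : ℝ, 0 < ηstar → g ηstar = ηstar → 1 / omega2 A s ≤ ηstar) ∧
    (∀ ηstar : ℝ, 0 < ηstar → h ηstar = ηstar → 1 / omegaBInf A s ≤ ηstar) :=
  stmt19_general A s g h hs1 hg hh
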